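/- Let k ≥ 2 be an integer, n := k−1, K(x,y) := (min(x,y)/max(x,y))^{n/2} on [0,1]² (with K(0,0) := 0), and T the integral operator (Tf)(x) := ∫₀¹ f(y) K(x,y) dy. Then for every f ∈ L²[0,1], the function Tf is continuously differentiable on (0,1], and for all x ∈ (0,1]: (Tf)'(x) = ∫₀¹ f(y) ∂K/∂x (x,y) dy = −(n/(2x)) (Tf)(x) + n x^{n/2−1} ∫_x^1 f(y) y^{−n/2} dy. -/

import Mathlib

/-!
For `x, y > 0` the kernel is `exp (-(n/2) |log x - log y|)`, so on `[a, ∞)` every `K(·, y)` is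
Lipschitz with constant `n/(2a)`, and it is differentiable off the diagonal `x = y`, a null set in
`y`. Differentiation under the integral sign with a Lipschitz dominant therefore gives
`(Tf)' = ∫ f ∂ₓK` at every `x > 0`, although `f` is only integrable. Since `∂ₓK = ±(n/2x) K`, with
sign `+` exactly when `y > x`, this integral is the closed form of the statement, and it is
continuous in `x` by dominated convergence: `|∂ₓK| ≤ n/2x` and `∂ₓK(·, y)` is continuous off `y`.
-/

open MeasureTheory Set

/-- The GPY kernel `K(x,y) = (min(x,y)/max(x,y))^(n/2)` (with `K(0,0) = 0`,
which holds automatically by Lean's conventions `0/0 = 0`, `0^(positive) = 0`). -/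
noncomputable def gpyKernel (n : ℕ) (x y : ℝ) : ℝ := (min x y / max x y) ^ ((n : ℝ) / 2)

/-- The `x`-partial derivative of the GPY kernel, for `x ≠ y` in `(0,1]`
(the value on the diagonal is irrelevant for the integrals below). -/
noncomputable def gpyKernelDx (n : ℕ) (x y : ℝ) : ℝ :=
  if x < y then ((n : ℝ) / 2) * x ^ ((n : ℝ) / 2 - 1) * y ^ (-(n : ℝ) / 2)
  else -((n : ℝ) / 2) * y ^ ((n : ℝ) / 2) * x ^ (-(n : ℝ) / 2 - 1)

namespace Real

theorem abs_exp_sub_exp_le_of_nonpos {s t : ℝ} (hs : s ≤ 0) (ht : t ≤ 0) :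
    |exp s - exp t| ≤ |s - t| := by
  wlog hst : s ≤ t generalizing s t
  · rw [abs_sub_comm, abs_sub_comm s]; exact this ht hs (le_of_not_ge hst)
  rw [abs_of_nonpos (by simpa using exp_le_exp.2 hst), abs_of_nonpos (by linarith)]
  have hgap : 1 - exp (-(t - s)) ≤ t - s := by linarith [one_sub_le_exp_neg (t - s)]
  have hgap_nonneg : 0 ≤ 1 - exp (-(t - s)) := by
    rw [sub_nonneg]; exact exp_le_one_iff.2 (by linarith)
  calc -(exp s - exp t) = exp t * (1 - exp (-(t - s))) := by
        rw [mul_sub, ← exp_add]; ring_nf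
    _ ≤ 1 * (t - s) := mul_le_mul (exp_le_one_iff.2 ht) hgap hgap_nonneg zero_le_one
    _ = -(s - t) := by ring

theorem abs_log_sub_log_le {a x y : ℝ} (ha : 0 < a) (hx : a ≤ x) (hy : a ≤ y) :
    |log x - log y| ≤ |x - y| / a := by
  wlog hxy : x ≤ y generalizing x y
  · rw [abs_sub_comm, abs_sub_comm x]; exact this hy hx (le_of_not_ge hxy)
  have hx0 : 0 < x := ha.trans_le hx
  rw [abs_of_nonpos (by linarith [log_le_log hx0 hxy]), abs_of_nonpos (by linarith)]
  calc -(log x - log y) = log (y / x) := by rw [log_div (by linarith) hx0.ne']; ring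
    _ ≤ y / x - 1 := log_le_sub_one_of_pos (div_pos (by linarith) hx0)
    _ = (y - x) / x := by field_simp
    _ ≤ (y - x) / a := div_le_div_of_nonneg_left (by linarith) ha hx
    _ = -(x - y) / a := by ring

end Real

open Real

section Kernel

variable (n : ℕ) {x y : ℝ}

theorem gpyKernel_of_le (hx : 0 ≤ x) (hxy : x ≤ y) :
    gpyKernel n x y = x ^ ((n : ℝ) / 2) * y ^ (-(n : ℝ) / 2) := by
  rw [gpyKernel, min_eq_left hxy, max_eq_right hxy, div_rpow hx (hx.trans hxy), neg_div,
    rpow_neg (hx.trans hxy), div_eq_mul_inv]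

theorem gpyKernel_of_ge (hy : 0 ≤ y) (hyx : y ≤ x) :
    gpyKernel n x y = y ^ ((n : ℝ) / 2) * x ^ (-(n : ℝ) / 2) := by
  rw [gpyKernel, min_eq_right hyx, max_eq_left hyx, div_rpow hy (hy.trans hyx), neg_div,
    rpow_neg (hy.trans hyx), div_eq_mul_inv]

theorem gpyKernel_nonneg (hx : 0 ≤ x) (hy : 0 ≤ y) : 0 ≤ gpyKernel n x y :=
  rpow_nonneg (div_nonneg (le_min hx hy) (le_max_of_le_left hx)) _

theorem gpyKernel_le_one (hx : 0 ≤ x) (hy : 0 ≤ y) : gpyKernel n x y ≤ 1 :=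
  rpow_le_one (div_nonneg (le_min hx hy) (le_max_of_le_left hx))
    (div_le_one_of_le₀ min_le_max (le_max_of_le_left hx)) (by positivity)

theorem gpyKernel_eq_exp (hx : 0 < x) (hy : 0 < y) :
    gpyKernel n x y = exp (-((n : ℝ) / 2 * |log x - log y|)) := by
  have hlog : log (min x y / max x y) = -|log x - log y| := by
    rw [log_div (lt_min hx hy).ne' (lt_max_of_lt_left hx).ne']
    rcases le_total x y with hxy | hyx
    · rw [min_eq_left hxy, max_eq_right hxy, abs_of_nonpos (by linarith [log_le_log hx hxy])]
      ring
    · rw [min_eq_right hyx, max_eq_left hyx, abs_of_nonneg (by linarith [log_le_log hy hyx])]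
      ring
  rw [gpyKernel, rpow_def_of_pos (div_pos (lt_min hx hy) (lt_max_of_lt_left hx)), hlog]
  ring_nf

theorem abs_gpyKernel_sub_le {a x' : ℝ} (ha : 0 < a) (hx : a ≤ x) (hx' : a ≤ x') (hy : 0 < y) :
    |gpyKernel n x y - gpyKernel n x' y| ≤ (n : ℝ) / 2 / a * |x - x'| := by
  set c : ℝ := (n : ℝ) / 2
  have hc : 0 ≤ c := by positivity
  rw [gpyKernel_eq_exp n (ha.trans_le hx) hy, gpyKernel_eq_exp n (ha.trans_le hx') hy]
  calc _ ≤ |-(c * |log x - log y|) - -(c * |log x' - log y|)| :=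
        abs_exp_sub_exp_le_of_nonpos (by simp only [neg_nonpos]; positivity)
          (by simp only [neg_nonpos]; positivity)
    _ = c * |(|log x - log y| - |log x' - log y|)| := by
        rw [show -(c * |log x - log y|) - -(c * |log x' - log y|)
            = -(c * (|log x - log y| - |log x' - log y|)) by ring, abs_neg, abs_mul,
          abs_of_nonneg hc]
    _ ≤ c * |log x - log x'| := by
        refine mul_le_mul_of_nonneg_left ?_ hc
        simpa only [sub_sub_sub_cancel_right] using
          abs_abs_sub_abs_le_abs_sub (log x - log y) (log x' - log y)
    _ ≤ c * (|x - x'| / a) := by gcongr; exact abs_log_sub_log_le ha hx hx'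
    _ = c / a * |x - x'| := by ring

theorem hasDerivAt_gpyKernel (hx : 0 < x) (hy : 0 < y) (hxy : x ≠ y) :
    HasDerivAt (gpyKernel n · y) (gpyKernelDx n x y) x := by
  rcases hxy.lt_or_gt with hxy | hyx
  · have hK : (gpyKernel n · y) =ᶠ[nhds x] fun t => t ^ ((n : ℝ) / 2) * y ^ (-(n : ℝ) / 2) := by
      filter_upwards [Ioi_mem_nhds hx, Iio_mem_nhds hxy] with t ht0 hty
      exact gpyKernel_of_le n (le_of_lt ht0) hty.le
    rw [gpyKernelDx, if_pos hxy]
    exact ((hasDerivAt_rpow_const (Or.inl hx.ne')).mul_const _).congr_of_eventuallyEq hK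
  · have hK : (gpyKernel n · y) =ᶠ[nhds x] fun t => y ^ ((n : ℝ) / 2) * t ^ (-(n : ℝ) / 2) := by
      filter_upwards [Ioi_mem_nhds hyx] with t hyt
      exact gpyKernel_of_ge n hy.le hyt.le
    rw [gpyKernelDx, if_neg hyx.not_gt]
    exact (((hasDerivAt_rpow_const (Or.inl hx.ne')).const_mul _).congr_of_eventuallyEq
      hK).congr_deriv (by ring)

theorem gpyKernelDx_eq (hx : 0 < x) (hy : 0 ≤ y) :
    gpyKernelDx n x y = (if x < y then 1 else -1) * ((n : ℝ) / (2 * x)) * gpyKernel n x y := by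
  rw [gpyKernelDx]
  split_ifs with hxy
  · rw [gpyKernel_of_le n hx.le hxy.le, rpow_sub_one hx.ne']
    field_simp
  · rw [gpyKernel_of_ge n hy (not_lt.1 hxy), rpow_sub_one hx.ne']
    field_simp

theorem abs_gpyKernelDx_le (hx : 0 < x) (hy : 0 ≤ y) :
    |gpyKernelDx n x y| ≤ (n : ℝ) / (2 * x) := by
  rw [gpyKernelDx_eq n hx hy, abs_mul, abs_mul, abs_of_nonneg (gpyKernel_nonneg n hx.le hy),
    abs_of_nonneg (by positivity : (0 : ℝ) ≤ (n : ℝ) / (2 * x))]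
  have : |(if x < y then (1 : ℝ) else -1)| = 1 := by split_ifs <;> simp
  rw [this, one_mul]
  exact mul_le_of_le_one_right (by positivity) (gpyKernel_le_one n hx.le hy)

theorem continuousAt_gpyKernelDx (hx : 0 < x) (hxy : x ≠ y) :
    ContinuousAt (gpyKernelDx n · y) x := by
  rcases hxy.lt_or_gt with hxy | hyx
  · have hDx : (gpyKernelDx n · y) =ᶠ[nhds x]
        fun t => (n : ℝ) / 2 * t ^ ((n : ℝ) / 2 - 1) * y ^ (-(n : ℝ) / 2) := by
      filter_upwards [Iio_mem_nhds hxy] with t hty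
      exact if_pos hty
    exact ((continuousAt_const.mul (continuousAt_rpow_const _ _ (Or.inl hx.ne'))).mul
      continuousAt_const).congr hDx.symm
  · have hDx : (gpyKernelDx n · y) =ᶠ[nhds x]
        fun t => -((n : ℝ) / 2) * y ^ ((n : ℝ) / 2) * t ^ (-(n : ℝ) / 2 - 1) := by
      filter_upwards [Ioi_mem_nhds hyx] with t hyt
      exact if_neg hyt.not_gt
    exact (continuousAt_const.mul (continuousAt_rpow_const _ _ (Or.inl hx.ne'))).congr hDx.symm

theorem measurable_gpyKernel : Measurable (gpyKernel n x) := by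
  unfold gpyKernel; fun_prop

theorem measurable_gpyKernelDx : Measurable (gpyKernelDx n x) := by
  unfold gpyKernelDx
  exact Measurable.ite measurableSet_Ioi (by fun_prop) (by fun_prop)

end Kernel

section Integral

variable {f : ℝ → ℝ} (n : ℕ) {x : ℝ}

theorem integrableOn_mul_gpyKernel (hf : IntegrableOn f (Icc 0 1)) (hx : 0 ≤ x) :
    IntegrableOn (fun y => f y * gpyKernel n x y) (Icc 0 1) := by
  refine hf.mul_bdd (c := 1) (measurable_gpyKernel n).aestronglyMeasurable ?_
  filter_upwards [ae_restrict_mem measurableSet_Icc] with y hy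
  rw [Real.norm_eq_abs, abs_of_nonneg (gpyKernel_nonneg n hx hy.1)]
  exact gpyKernel_le_one n hx hy.1

theorem integrableOn_mul_rpow_neg (hf : IntegrableOn f (Icc 0 1)) (hx : 0 < x) :
    IntegrableOn (fun y => f y * y ^ (-(n : ℝ) / 2)) (Ioc x 1) := by
  refine (hf.mono_set (Ioc_subset_Icc_self.trans (Icc_subset_Icc_left hx.le))).mul_bdd
    (c := x ^ (-(n : ℝ) / 2)) (measurable_id.pow_const _).aestronglyMeasurable ?_
  filter_upwards [ae_restrict_mem measurableSet_Ioc] with y hy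
  rw [Real.norm_eq_abs, abs_of_nonneg (rpow_nonneg (hx.trans hy.1).le _)]
  exact rpow_le_rpow_of_nonpos hx hy.1.le (by simp only [neg_div, neg_nonpos]; positivity)

theorem hasDerivAt_integral_mul_gpyKernel (hf : IntegrableOn f (Icc 0 1)) (hx : 0 < x) :
    HasDerivAt (fun x => ∫ y in Icc 0 1, f y * gpyKernel n x y)
      (∫ y in Icc 0 1, f y * gpyKernelDx n x y) x := by
  have hae : ∀ᵐ y ∂volume.restrict (Icc (0 : ℝ) 1), 0 < y ∧ y ≠ x := by
    filter_upwards [ae_restrict_mem measurableSet_Icc, Measure.ae_ne _ 0, Measure.ae_ne _ x]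
      with y hy hy0 hyx
    exact ⟨lt_of_le_of_ne hy.1 (Ne.symm hy0), hyx⟩
  refine (hasDerivAt_integral_of_dominated_loc_of_lip (Ioi_mem_nhds (half_lt_self hx))
    (F := fun x y => f y * gpyKernel n x y) (F' := fun y => f y * gpyKernelDx n x y)
    (bound := fun y => |f y| * ((n : ℝ) / 2 / (x / 2)))
    (.of_forall fun _ => hf.aestronglyMeasurable.mul
      (measurable_gpyKernel n).aestronglyMeasurable)
    (integrableOn_mul_gpyKernel n hf hx.le)
    (hf.aestronglyMeasurable.mul (measurable_gpyKernelDx n).aestronglyMeasurable)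
    ?_ (hf.abs.mul_const _) ?_).2
  · filter_upwards [hae] with y hy
    refine LipschitzOnWith.of_dist_le_mul fun x₁ hx₁ x₂ hx₂ => ?_
    rw [Real.dist_eq, Real.dist_eq, ← mul_sub, abs_mul, Real.coe_nnabs, abs_mul, abs_abs,
      abs_of_nonneg (by positivity : (0 : ℝ) ≤ (n : ℝ) / 2 / (x / 2)), mul_assoc]
    exact mul_le_mul_of_nonneg_left
      (abs_gpyKernel_sub_le n (half_pos hx) (le_of_lt hx₁) (le_of_lt hx₂) hy.1) (abs_nonneg _)
  · filter_upwards [hae] with y hy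
    exact (hasDerivAt_gpyKernel n hx hy.1 hy.2.symm).const_mul (f y)

theorem continuousAt_integral_mul_gpyKernelDx (hf : IntegrableOn f (Icc 0 1)) (hx : 0 < x) :
    ContinuousAt (fun x => ∫ y in Icc 0 1, f y * gpyKernelDx n x y) x := by
  refine continuousAt_of_dominated (bound := fun y => |f y| * ((n : ℝ) / (2 * (x / 2))))
    (.of_forall fun _ => hf.aestronglyMeasurable.mul
      (measurable_gpyKernelDx n).aestronglyMeasurable) ?_ (hf.abs.mul_const _) ?_
  · filter_upwards [Ioi_mem_nhds (half_lt_self hx)] with x' hx'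
    filter_upwards [ae_restrict_mem measurableSet_Icc] with y hy
    rw [Real.norm_eq_abs, abs_mul]
    refine mul_le_mul_of_nonneg_left
      ((abs_gpyKernelDx_le n ((half_pos hx).trans hx') hy.1).trans ?_) (abs_nonneg _)
    exact div_le_div_of_nonneg_left (by positivity) (by positivity)
      (by linarith [show x / 2 < x' from hx'])
  · filter_upwards [Measure.ae_ne _ x] with y hyx
    exact continuousAt_const.mul (continuousAt_gpyKernelDx n hx hyx.symm)

theorem integral_mul_gpyKernelDx (hf : IntegrableOn f (Icc 0 1)) (hx : 0 < x) :
    ∫ y in Icc 0 1, f y * gpyKernelDx n x y =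
      -((n : ℝ) / (2 * x)) * (∫ y in Icc 0 1, f y * gpyKernel n x y) +
        n * x ^ ((n : ℝ) / 2 - 1) * ∫ y in Icc x 1, f y * y ^ (-(n : ℝ) / 2) := by
  have hsub : Ioc x 1 ⊆ Icc 0 1 := Ioc_subset_Icc_self.trans (Icc_subset_Icc_left hx.le)
  have hsplit : EqOn (fun y => f y * gpyKernelDx n x y)
      (fun y => -((n : ℝ) / (2 * x)) * (f y * gpyKernel n x y) +
        n * x ^ ((n : ℝ) / 2 - 1) * (Ioc x 1).indicator (fun y => f y * y ^ (-(n : ℝ) / 2)) y)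
      (Icc 0 1) := by
    intro y hy
    simp only [gpyKernelDx_eq n hx hy.1]
    by_cases hxy : x < y
    · rw [if_pos hxy, indicator_of_mem (show y ∈ Ioc x 1 from ⟨hxy, hy.2⟩),
        gpyKernel_of_le n hx.le hxy.le, rpow_sub_one hx.ne']
      field_simp
      ring
    · rw [if_neg hxy, indicator_of_notMem fun h => hxy h.1]
      ring
  rw [setIntegral_congr_fun measurableSet_Icc hsplit,
    integral_add ((integrableOn_mul_gpyKernel n hf hx.le).const_mul _)
      (((integrableOn_mul_rpow_neg n hf hx).restrict.integrable_indicator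
        measurableSet_Ioc).const_mul _),
    integral_const_mul, integral_const_mul, setIntegral_indicator measurableSet_Ioc,
    inter_eq_right.2 hsub, ← integral_Icc_eq_integral_Ioc]

end Integral

/-- For `k ≥ 2`, `n := k-1` and `f ∈ L²[0,1]`, the function
`Tf(x) = ∫₀¹ f(y) K(x,y) dy` is continuously differentiable on `(0,1]`, with
`(Tf)'(x) = ∫₀¹ f(y) ∂K/∂x(x,y) dy = -(n/(2x)) (Tf)(x) + n x^(n/2-1) ∫_x^1 f(y) y^(-n/2) dy`. -/
theorem gpy_Tf_differentiable (k : ℕ) (hk : 2 ≤ k) (f : ℝ → ℝ)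
    (hf : MemLp f 2 (volume.restrict (Set.Icc (0:ℝ) 1)))
    (g D : ℝ → ℝ)
    (hg : g = fun x => ∫ y in Set.Icc (0:ℝ) 1, f y * gpyKernel (k - 1) x y)
    (hD : D = fun x => -(((k : ℝ) - 1) / (2 * x)) * g x +
      ((k : ℝ) - 1) * x ^ (((k : ℝ) - 1) / 2 - 1) *
        ∫ y in Set.Icc x 1, f y * y ^ (-((k : ℝ) - 1) / 2)) :
    (∀ x ∈ Set.Ioc (0:ℝ) 1, HasDerivWithinAt g (D x) (Set.Ioc 0 1) x) ∧
    (∀ x ∈ Set.Ioc (0:ℝ) 1,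
      D x = ∫ y in Set.Icc (0:ℝ) 1, f y * gpyKernelDx (k - 1) x y) ∧
    ContinuousOn D (Set.Ioc 0 1) := by
  obtain ⟨n, rfl⟩ : ∃ n, k = n + 1 := ⟨k - 1, by omega⟩
  simp only [Nat.cast_add, Nat.cast_one, add_sub_cancel_right, Nat.add_sub_cancel] at hg hD ⊢
  have hfi : IntegrableOn f (Icc 0 1) := hf.integrable one_le_two
  have hDx : ∀ x ∈ Ioc (0 : ℝ) 1, D x = ∫ y in Icc 0 1, f y * gpyKernelDx n x y := by
    intro x hx
    subst hg hD
    exact (integral_mul_gpyKernelDx n hfi hx.1).symm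
  refine ⟨fun x hx => ?_, hDx, fun x hx => ?_⟩
  · rw [hDx x hx, hg]
    exact (hasDerivAt_integral_mul_gpyKernel n hfi hx.1).hasDerivWithinAt
  · exact (continuousAt_integral_mul_gpyKernelDx n hfi hx.1).continuousWithinAt.congr hDx
      (hDx x hx)
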